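/- arXiv:1709.08125 — 2 statements merged into one kernel-verified Lean document; each statement's English description precedes it below -/
import Mathlib

section
/- Suppose G = UΛZ and D = VMZ where UᵀU = I_q, VᵀV = I_q, Λ = diag(λ_i), M = diag(μ_i) ∈ ℝ^{q×q} with λ_i² + μ_i² = 1, and Z ∈ ℝ^{q×n} has full row rank q. Then for α > 0 the vector h(α) = Σ_{i=1}^{q} (γ_i²/(γ_i² + α²)) (u_iᵀ r / λ_i) (Z⁺)_i, with γ_i = λ_i/μ_i (all λ_i, μ_i > 0), satisfies (GᵀG + α²DᵀD) h(α) = Gᵀ r for every r ∈ ℝ^m. -/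
open Matrix

theorem stmt_11 (m n p q : ℕ)
    (G : Matrix (Fin m) (Fin n) ℝ) (D : Matrix (Fin p) (Fin n) ℝ)
    (U : Matrix (Fin m) (Fin q) ℝ) (V : Matrix (Fin p) (Fin q) ℝ)
    (Z : Matrix (Fin q) (Fin n) ℝ) (Zp : Matrix (Fin n) (Fin q) ℝ)
    (lam mu : Fin q → ℝ)
    (hU : Uᵀ * U = 1) (hV : Vᵀ * V = 1)
    (hG : G = U * Matrix.diagonal lam * Z) (hD : D = V * Matrix.diagonal mu * Z)
    (hunit : ∀ i, lam i ^ 2 + mu i ^ 2 = 1)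
    (hlam : ∀ i, 0 < lam i) (hmu : ∀ i, 0 < mu i)
    (hrank : IsUnit (Z * Zᵀ))
    (hZp : Z * Zp * Z = Z ∧ Zp * Z * Zp = Zp ∧ (Z * Zp)ᵀ = Z * Zp ∧ (Zp * Z)ᵀ = Zp * Z)
    (r : Fin m → ℝ) (α : ℝ) (hα : 0 < α) :
    (Gᵀ * G + α ^ 2 • (Dᵀ * D)).mulVec
      (∑ i, ((lam i / mu i) ^ 2 / ((lam i / mu i) ^ 2 + α ^ 2) *
        ((∑ j, U j i * r j) / lam i)) • (fun j => Zp j i)) = Gᵀ.mulVec r := by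
  obtain ⟨h1, h2, h3, h4⟩ := hZp
  have hZZp : Z * Zp = 1 := by
    have h5 : (Z * Zp) * (Z * Zᵀ) = 1 * (Z * Zᵀ) := by
      rw [one_mul, ← Matrix.mul_assoc, h1]
    exact hrank.mul_right_cancel h5
  set c : Fin q → ℝ := fun i => (lam i / mu i) ^ 2 / ((lam i / mu i) ^ 2 + α ^ 2) *
        ((∑ j, U j i * r j) / lam i) with hc
  have hsum : (∑ i, c i • (fun j => Zp j i)) = Zp.mulVec c := by
    funext j
    simp [Matrix.mulVec, dotProduct, Finset.sum_apply, mul_comm]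
  rw [hsum]
  have hGtG : Gᵀ * G = Zᵀ * Matrix.diagonal (fun i => lam i ^ 2) * Z := by
    subst hG
    rw [Matrix.transpose_mul, Matrix.transpose_mul, Matrix.diagonal_transpose]
    calc Zᵀ * (Matrix.diagonal lam * Uᵀ) * (U * Matrix.diagonal lam * Z)
        = Zᵀ * (Matrix.diagonal lam * ((Uᵀ * U) * Matrix.diagonal lam)) * Z := by
          simp only [Matrix.mul_assoc]
      _ = Zᵀ * Matrix.diagonal (fun i => lam i ^ 2) * Z := by
          rw [hU, Matrix.one_mul, Matrix.diagonal_mul_diagonal]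
          congr 2
          ext i
          ring
  have hDtD : Dᵀ * D = Zᵀ * Matrix.diagonal (fun i => mu i ^ 2) * Z := by
    subst hD
    rw [Matrix.transpose_mul, Matrix.transpose_mul, Matrix.diagonal_transpose]
    calc Zᵀ * (Matrix.diagonal mu * Vᵀ) * (V * Matrix.diagonal mu * Z)
        = Zᵀ * (Matrix.diagonal mu * ((Vᵀ * V) * Matrix.diagonal mu)) * Z := by
          simp only [Matrix.mul_assoc]
      _ = Zᵀ * Matrix.diagonal (fun i => mu i ^ 2) * Z := by
          rw [hV, Matrix.one_mul, Matrix.diagonal_mul_diagonal]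
          congr 2
          ext i
          ring
  have hGt : Gᵀ = Zᵀ * Matrix.diagonal lam * Uᵀ := by
    subst hG
    rw [Matrix.transpose_mul, Matrix.transpose_mul, Matrix.diagonal_transpose,
      Matrix.mul_assoc]
  rw [hGtG, hDtD, hGt]
  have hcancel : ∀ (d : Fin q → ℝ),
      (Zᵀ * Matrix.diagonal d * Z).mulVec (Zp.mulVec c)
        = Zᵀ.mulVec (fun i => d i * c i) := by
    intro d
    rw [Matrix.mulVec_mulVec, Matrix.mul_assoc, Matrix.mul_assoc, hZZp, Matrix.mul_one,
      ← Matrix.mulVec_mulVec]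
    congr 1
    funext i
    simp [Matrix.mulVec, dotProduct, Matrix.diagonal]
  rw [Matrix.add_mulVec, Matrix.smul_mulVec, hcancel, hcancel,
    ← Matrix.mulVec_smul, ← Matrix.mulVec_add, Matrix.mul_assoc,
    ← Matrix.mulVec_mulVec, ← Matrix.mulVec_mulVec]
  refine congrArg _ (funext fun i => ?_)
  have hl := (hlam i).ne'
  have hm := (hmu i).ne'
  have hden : lam i ^ 2 + α ^ 2 * mu i ^ 2 ≠ 0 := by positivity
  have hden2 : (lam i / mu i) ^ 2 + α ^ 2 ≠ 0 := by positivity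
  simp only [Pi.add_apply, Pi.smul_apply, smul_eq_mul, hc]
  have hUt : (Matrix.diagonal lam).mulVec (Uᵀ.mulVec r) i = lam i * ∑ j, U j i * r j := by
    simp [Matrix.mulVec, dotProduct, Matrix.diagonal, Matrix.transpose]
  rw [hUt]
  field_simp
end

section
/- Let G ∈ ℝ^{m×n}, D ∈ ℝ^{p×n} with N(G) ∩ N(D) = {0}, and r ∈ ℝ^m. As α → ∞, the Tikhonov minimizer h(α) = (GᵀG + α²DᵀD)^{−1}Gᵀr converges to the minimizer of ‖Gh − r‖² over the null space of D; in particular, if D has trivial null space, h(α) → 0. -/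
open Matrix

private lemma dot_transpose_mulVec {m n : ℕ} (M : Matrix (Fin m) (Fin n) ℝ) (v : Fin n → ℝ)
    (w : Fin m → ℝ) : v ⬝ᵥ (Mᵀ *ᵥ w) = (M *ᵥ v) ⬝ᵥ w := by
  rw [dotProduct_mulVec, vecMul_transpose]

private lemma dot_self_nonneg' {n : ℕ} (v : Fin n → ℝ) : 0 ≤ v ⬝ᵥ v :=
  Finset.sum_nonneg fun _ _ => mul_self_nonneg _

private lemma quadform_eval {m n p : ℕ} (G : Matrix (Fin m) (Fin n) ℝ)
    (D : Matrix (Fin p) (Fin n) ℝ) (α : ℝ) (v w : Fin n → ℝ) :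
    v ⬝ᵥ ((Gᵀ * G + α ^ 2 • (Dᵀ * D)) *ᵥ w) =
      (G *ᵥ v) ⬝ᵥ (G *ᵥ w) + α ^ 2 * ((D *ᵥ v) ⬝ᵥ (D *ᵥ w)) := by
  rw [add_mulVec, dotProduct_add, smul_mulVec, dotProduct_smul,
    ← mulVec_mulVec, dot_transpose_mulVec, ← mulVec_mulVec, dot_transpose_mulVec]
  simp

private lemma isUnitA {m n p : ℕ} (G : Matrix (Fin m) (Fin n) ℝ) (D : Matrix (Fin p) (Fin n) ℝ)
    (hns : ∀ x : Fin n → ℝ, G.mulVec x = 0 → D.mulVec x = 0 → x = 0)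
    (α : ℝ) (hα : α ≠ 0) : IsUnit (Gᵀ * G + α ^ 2 • (Dᵀ * D)).det := by
  rw [isUnit_iff_ne_zero]
  intro hdet
  obtain ⟨v, hv, hv0⟩ := (Matrix.exists_mulVec_eq_zero_iff).mpr hdet
  have h0 : v ⬝ᵥ ((Gᵀ * G + α ^ 2 • (Dᵀ * D)) *ᵥ v) = 0 := by rw [hv0, dotProduct_zero]
  rw [quadform_eval] at h0
  have h1 : 0 ≤ (G *ᵥ v) ⬝ᵥ (G *ᵥ v) := dot_self_nonneg' _
  have h2 : 0 ≤ (D *ᵥ v) ⬝ᵥ (D *ᵥ v) := dot_self_nonneg' _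
  have hα2 : 0 < α ^ 2 := by positivity
  have hG : (G *ᵥ v) ⬝ᵥ (G *ᵥ v) = 0 := by nlinarith
  have hD : (D *ᵥ v) ⬝ᵥ (D *ᵥ v) = 0 := by nlinarith
  exact hv (hns v (dotProduct_self_eq_zero.mp hG) (dotProduct_self_eq_zero.mp hD))

private lemma coordBound {m n p : ℕ} (G : Matrix (Fin m) (Fin n) ℝ) (D : Matrix (Fin p) (Fin n) ℝ)
    (u : Fin p → ℝ) (α : ℝ) (hα : 1 ≤ α) (e : Fin n → ℝ)
    (hAe : (Gᵀ * G + α ^ 2 • (Dᵀ * D)) *ᵥ e = Dᵀ *ᵥ u) :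
    (∀ i, |(G *ᵥ e) i| ≤ Real.sqrt (u ⬝ᵥ u) / α) ∧
    (∀ i, |(D *ᵥ e) i| ≤ Real.sqrt (u ⬝ᵥ u) / α) := by
  set a := (G *ᵥ e) ⬝ᵥ (G *ᵥ e) with ha
  set b := (D *ᵥ e) ⬝ᵥ (D *ᵥ e) with hb
  set K := u ⬝ᵥ u with hK
  have ha0 : 0 ≤ a := dot_self_nonneg' _
  have hb0 : 0 ≤ b := dot_self_nonneg' _
  have hK0 : 0 ≤ K := dot_self_nonneg' _
  have hα0 : 0 < α := lt_of_lt_of_le one_pos hα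
  have hsum : a + α ^ 2 * b = (D *ᵥ e) ⬝ᵥ u := by
    have h1 := congrArg (fun w => e ⬝ᵥ w) hAe
    rw [quadform_eval, dot_transpose_mulVec] at h1
    exact h1
  have hCS : ((D *ᵥ e) ⬝ᵥ u) ^ 2 ≤ b * K := by
    have h2 := Finset.sum_mul_sq_le_sq_mul_sq Finset.univ (D *ᵥ e) u
    have hb' : b = ∑ i, ((D *ᵥ e) i) ^ 2 := by simp [hb, dotProduct, sq]
    have hK' : K = ∑ i, (u i) ^ 2 := by simp [hK, dotProduct, sq]
    rw [hb', hK']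
    exact h2
  have hsq : (a + α ^ 2 * b) ^ 2 ≤ b * K := by rw [hsum]; exact hCS
  have hbb : b * α ^ 4 ≤ K := by
    rcases eq_or_lt_of_le hb0 with h | h
    · rw [← h, zero_mul]; exact hK0
    · have h4 : b * (b * α ^ 4) ≤ b * K := by
        nlinarith [sq_nonneg a, mul_nonneg (mul_nonneg ha0 (sq_nonneg α)) hb0]
      exact le_of_mul_le_mul_left h4 h
  have habk : a ^ 2 ≤ b * K := by
    nlinarith [mul_nonneg (mul_nonneg ha0 (sq_nonneg α)) hb0, sq_nonneg (α ^ 2 * b)]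
  have haa : a * α ^ 2 ≤ K := by
    have h1 : a ^ 2 * α ^ 4 ≤ K ^ 2 := by
      nlinarith [mul_le_mul_of_nonneg_right hbb hK0,
        mul_le_mul_of_nonneg_right habk (pow_nonneg hα0.le 4)]
    by_contra hcon
    push_neg at hcon
    have ht0 : 0 ≤ a * α ^ 2 := mul_nonneg ha0 (sq_nonneg α)
    nlinarith [h1, mul_le_mul_of_nonneg_left hcon.le hK0]
  have main : ∀ (q : ℕ) (M : Matrix (Fin q) (Fin n) ℝ), (M *ᵥ e) ⬝ᵥ (M *ᵥ e) * α ^ 2 ≤ K →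
      ∀ i, |(M *ᵥ e) i| ≤ Real.sqrt K / α := by
    intro q M hM i
    have hsingle : ((M *ᵥ e) i) ^ 2 ≤ (M *ᵥ e) ⬝ᵥ (M *ᵥ e) := by
      have : (M *ᵥ e) ⬝ᵥ (M *ᵥ e) = ∑ j, ((M *ᵥ e) j) ^ 2 := by simp [dotProduct, sq]
      rw [this]
      exact Finset.single_le_sum (f := fun j => ((M *ᵥ e) j) ^ 2)
        (fun j _ => sq_nonneg _) (Finset.mem_univ i)
    have h2 : ((M *ᵥ e) i) ^ 2 ≤ K / α ^ 2 := by
      rw [le_div_iff₀ (by positivity)]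
      nlinarith [sq_nonneg α]
    calc |(M *ᵥ e) i| = Real.sqrt (((M *ᵥ e) i) ^ 2) := (Real.sqrt_sq_eq_abs _).symm
      _ ≤ Real.sqrt (K / α ^ 2) := Real.sqrt_le_sqrt h2
      _ = Real.sqrt K / α := by
          rw [Real.sqrt_div hK0, Real.sqrt_sq hα0.le]
  have hA21 : (0:ℝ) ≤ α ^ 2 - 1 := by nlinarith
  have hbb2 : b * α ^ 2 ≤ K := by
    nlinarith [mul_nonneg hb0 (mul_nonneg (sq_nonneg α) hA21)]
  exact ⟨main m G haa, main p D hbb2⟩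

private lemma existsMin {m n p : ℕ} (G : Matrix (Fin m) (Fin n) ℝ) (D : Matrix (Fin p) (Fin n) ℝ)
    (hns : ∀ x : Fin n → ℝ, G.mulVec x = 0 → D.mulVec x = 0 → x = 0) (r : Fin m → ℝ) :
    ∃ (h : Fin n → ℝ) (u : Fin p → ℝ), D.mulVec h = 0 ∧
      Dᵀ.mulVec u = Gᵀ.mulVec r - (Gᵀ * G).mulVec h := by
  classical
  set gg : EuclideanSpace ℝ (Fin n) →ₗ[ℝ] EuclideanSpace ℝ (Fin n) :=
    Matrix.toEuclideanLin (Gᵀ * G) with hgg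
  set d : EuclideanSpace ℝ (Fin n) →ₗ[ℝ] EuclideanSpace ℝ (Fin p) := Matrix.toEuclideanLin D
    with hd
  set dt : EuclideanSpace ℝ (Fin p) →ₗ[ℝ] EuclideanSpace ℝ (Fin n) := Matrix.toEuclideanLin Dᵀ
    with hdt
  set V : Submodule ℝ (EuclideanSpace ℝ (Fin n)) := LinearMap.ker d with hV
  set Φ : (V × EuclideanSpace ℝ (Fin p)) →ₗ[ℝ] EuclideanSpace ℝ (Fin n) :=
    (gg.comp V.subtype).coprod dt with hΦ
  have hinner : ∀ (x y : EuclideanSpace ℝ (Fin n)), (inner ℝ x y : ℝ) = x ⬝ᵥ y := by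
    intro x y
    simp [PiLp.inner_apply, dotProduct, mul_comm]
  have hrange : LinearMap.range Φ = ⊤ := by
    rw [← Submodule.orthogonal_eq_bot_iff, Submodule.eq_bot_iff]
    intro x hx
    have hx' : ∀ y, (inner ℝ (Φ y) x : ℝ) = 0 := fun y =>
      (Submodule.mem_orthogonal (LinearMap.range Φ) x).mp hx _ ⟨y, rfl⟩
    have hDx : D *ᵥ x = 0 := by
      have h1 := hx' (0, WithLp.toLp 2 (D *ᵥ x))
      have h2 : (inner ℝ (dt (WithLp.toLp 2 (D *ᵥ x))) x : ℝ) = 0 := by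
        simpa [hΦ] using h1
      rw [hinner] at h2
      have h3 : (Dᵀ *ᵥ (D *ᵥ x)) ⬝ᵥ x = (D *ᵥ x) ⬝ᵥ (D *ᵥ x) := by
        rw [dotProduct_comm, dot_transpose_mulVec]
      have : (D *ᵥ x) ⬝ᵥ (D *ᵥ x) = 0 := by
        rw [← h3]; exact h2
      exact dotProduct_self_eq_zero.mp this
    have hxV : x ∈ V := by
      rw [hV, LinearMap.mem_ker]; simp [hd, toEuclideanLin_apply, hDx]
    have hGx : G *ᵥ x = 0 := by
      have h1 := hx' (⟨x, hxV⟩, 0)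
      have h2 : (inner ℝ (gg x) x : ℝ) = 0 := by
        simpa [hΦ] using h1
      rw [hinner] at h2
      have h3 : ((Gᵀ * G) *ᵥ x) ⬝ᵥ x = (G *ᵥ x) ⬝ᵥ (G *ᵥ x) := by
        rw [dotProduct_comm, ← mulVec_mulVec, dot_transpose_mulVec]
      have : (G *ᵥ x) ⬝ᵥ (G *ᵥ x) = 0 := by
        rw [← h3]; exact h2
      exact dotProduct_self_eq_zero.mp this
    simpa using congrArg (WithLp.toLp 2) (hns x hGx hDx)
  obtain ⟨⟨h, u⟩, hhu⟩ : ∃ y, Φ y = WithLp.toLp 2 (Gᵀ *ᵥ r) := by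
    have : WithLp.toLp 2 (Gᵀ *ᵥ r) ∈ LinearMap.range Φ :=
      hrange ▸ Submodule.mem_top
    exact this
  refine ⟨h, u, (by have h2 : d h = 0 := h.2; exact congrArg WithLp.ofLp h2), ?_⟩
  have : (Gᵀ * G) *ᵥ (h : Fin n → ℝ) + Dᵀ *ᵥ u = Gᵀ *ᵥ r := by
    simpa [hΦ, hgg, hdt, toEuclideanLin_apply] using congrArg WithLp.ofLp hhu
  linear_combination (norm := module) this

theorem stmt_16 (m n p : ℕ) (G : Matrix (Fin m) (Fin n) ℝ) (D : Matrix (Fin p) (Fin n) ℝ)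
    (hns : ∀ x : Fin n → ℝ, G.mulVec x = 0 → D.mulVec x = 0 → x = 0)
    (r : Fin m → ℝ) :
    let hsol : ℝ → (Fin n → ℝ) := fun α =>
      (Gᵀ * G + α ^ 2 • (Dᵀ * D))⁻¹.mulVec (Gᵀ.mulVec r)
    ∃ hinf : Fin n → ℝ, D.mulVec hinf = 0 ∧
      (∀ h' : Fin n → ℝ, D.mulVec h' = 0 →
        ∑ i, (G.mulVec hinf - r) i ^ 2 ≤ ∑ i, (G.mulVec h' - r) i ^ 2) ∧
      Filter.Tendsto hsol Filter.atTop (nhds hinf) ∧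
      ((∀ x : Fin n → ℝ, D.mulVec x = 0 → x = 0) → hinf = 0) := by
  intro hsol
  obtain ⟨hinf, u, hD, hu⟩ := existsMin G D hns r
  refine ⟨hinf, hD, ?_, ?_, fun hker => hker _ hD⟩
  · -- minimality
    intro h' hD'
    have hsumdot : ∀ x : Fin m → ℝ, ∑ i, (x i) ^ 2 = x ⬝ᵥ x := fun x => by
      simp [dotProduct, sq]
    rw [hsumdot, hsumdot]
    have hδ : D *ᵥ (h' - hinf) = 0 := by rw [mulVec_sub, hD', hD, sub_zero]
    have hsplit : G *ᵥ h' - r = (G *ᵥ hinf - r) + G *ᵥ (h' - hinf) := by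
      rw [mulVec_sub]; abel
    have horth : (G *ᵥ (h' - hinf)) ⬝ᵥ (G *ᵥ hinf - r) = 0 := by
      rw [← dot_transpose_mulVec]
      have hG : Gᵀ *ᵥ (G *ᵥ hinf - r) = -(Dᵀ *ᵥ u) := by
        rw [mulVec_sub, mulVec_mulVec, hu]
        abel
      rw [hG, dotProduct_neg, dot_transpose_mulVec, hδ, zero_dotProduct, neg_zero]
    have hqw : (G *ᵥ hinf - r) ⬝ᵥ (G *ᵥ (h' - hinf)) = 0 :=
      (dotProduct_comm _ _).trans horth
    rw [hsplit, dotProduct_add, add_dotProduct, add_dotProduct, horth, hqw]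
    linarith [dot_self_nonneg' (G *ᵥ (h' - hinf))]
  · -- convergence
    have hAe : ∀ α : ℝ, 1 ≤ α →
        (Gᵀ * G + α ^ 2 • (Dᵀ * D)) *ᵥ (hsol α - hinf) = Dᵀ *ᵥ u := by
      intro α hα
      have hdet := isUnitA G D hns α (by linarith)
      have h1 : (Gᵀ * G + α ^ 2 • (Dᵀ * D)) *ᵥ (hsol α) = Gᵀ *ᵥ r := by
        show (Gᵀ * G + α ^ 2 • (Dᵀ * D)) *ᵥ
          ((Gᵀ * G + α ^ 2 • (Dᵀ * D))⁻¹ *ᵥ (Gᵀ *ᵥ r)) = Gᵀ *ᵥ r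
        rw [mulVec_mulVec, Matrix.mul_nonsing_inv _ hdet, one_mulVec]
      have h2 : (Gᵀ * G + α ^ 2 • (Dᵀ * D)) *ᵥ hinf = (Gᵀ * G) *ᵥ hinf := by
        rw [add_mulVec, smul_mulVec, ← mulVec_mulVec hinf Dᵀ D, hD, mulVec_zero, smul_zero, add_zero]
      rw [mulVec_sub, h1, h2]
      exact hu.symm
    have hbound : Filter.Tendsto (fun α : ℝ => Real.sqrt (u ⬝ᵥ u) / α)
        Filter.atTop (nhds 0) := by
      simpa [div_eq_mul_inv] using tendsto_inv_atTop_zero.const_mul (Real.sqrt (u ⬝ᵥ u))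
    have hGtend : Filter.Tendsto (fun α => G *ᵥ (hsol α - hinf)) Filter.atTop (nhds 0) := by
      rw [tendsto_pi_nhds]
      intro i
      refine squeeze_zero_norm' ?_ hbound
      filter_upwards [Filter.eventually_ge_atTop 1] with α hα
      rw [Real.norm_eq_abs]
      exact (coordBound G D u α hα _ (hAe α hα)).1 i
    have hDtend : Filter.Tendsto (fun α => D *ᵥ (hsol α - hinf)) Filter.atTop (nhds 0) := by
      rw [tendsto_pi_nhds]
      intro i
      refine squeeze_zero_norm' ?_ hbound
      filter_upwards [Filter.eventually_ge_atTop 1] with α hα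
      rw [Real.norm_eq_abs]
      exact (coordBound G D u α hα _ (hAe α hα)).2 i
    have hker : LinearMap.ker (G.mulVecLin.prod D.mulVecLin) = ⊥ := by
      rw [LinearMap.ker_eq_bot']
      intro x hx
      rw [LinearMap.prod_apply] at hx
      exact hns x (congrArg Prod.fst hx) (congrArg Prod.snd hx)
    obtain ⟨L, hL⟩ := (G.mulVecLin.prod D.mulVecLin).exists_leftInverse_of_injective hker
    have hLx : ∀ x : Fin n → ℝ, L (G *ᵥ x, D *ᵥ x) = x := by
      intro x
      have := LinearMap.ext_iff.mp hL x
      simpa using this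
    have hcont : Continuous L := L.continuous_of_finiteDimensional
    have hFe : Filter.Tendsto (fun α => (G *ᵥ (hsol α - hinf), D *ᵥ (hsol α - hinf)))
        Filter.atTop (nhds ((0 : Fin m → ℝ), (0 : Fin p → ℝ))) :=
      hGtend.prodMk_nhds hDtend
    have hetend : Filter.Tendsto (fun α => hsol α - hinf) Filter.atTop (nhds 0) := by
      have h1 := (hcont.tendsto ((0 : Fin m → ℝ), (0 : Fin p → ℝ))).comp hFe
      have h2 : L ((0 : Fin m → ℝ), (0 : Fin p → ℝ)) = 0 := map_zero L
      rw [h2] at h1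
      refine h1.congr fun α => ?_
      exact hLx (hsol α - hinf)
    have := hetend.add_const hinf
    rw [zero_add] at this
    refine this.congr fun α => ?_
    abel
end
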